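/- arXiv:2403.16591 — 4 statements merged into one kernel-verified Lean document; each statement's English description precedes it below -/
import Mathlib

section
/- Suppose the attacker's prior belief density f^B satisfies e^{-ε} ≤ f^B(d)/f_D(d) ≤ e^{ε} for all d, and the mechanism satisfies ε_m-Maximum Bayesian Privacy, i.e., e^{-ε_m} ≤ f_{D|W}(d|w)/f_D(d) ≤ e^{ε_m} for all d, w. Then the averaged posterior f^A(d) = ∫ f_{D|W}(d|w) dP(w) satisfies |log(f^A(d)/f^B(d))| ≤ ε_m + ε for all d. -/
open Real MeasureTheory

/-- if the attacker's prior is ε-close to the true prior and the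
mechanism satisfies ε_m-MBP, then the averaged posterior is (ε_m+ε)-close to the
attacker's prior. -/
theorem averaged_posterior_close_to_prior
    {Ω : Type*} [MeasurableSpace Ω] (P : Measure Ω) [IsProbabilityMeasure P]
    {Dty : Type*} (fD fB : Dty → ℝ) (post : Dty → Ω → ℝ) (εm ε : ℝ)
    (hεm : 0 ≤ εm) (hε : 0 ≤ ε)
    (hfD : ∀ d, 0 < fD d) (hfB : ∀ d, 0 < fB d)
    (hint : ∀ d, Integrable (post d) P)
    (hprior : ∀ d, Real.exp (-ε) ≤ fB d / fD d ∧ fB d / fD d ≤ Real.exp ε)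
    (hMBP : ∀ d w, Real.exp (-εm) ≤ post d w / fD d ∧ post d w / fD d ≤ Real.exp εm) :
    ∀ d, |Real.log ((∫ w, post d w ∂P) / fB d)| ≤ εm + ε := by
  intro d
  have hD := hfD d
  have hB := hfB d
  -- pointwise bounds on post d w
  have hlo : ∀ w, fD d * Real.exp (-εm) ≤ post d w := by
    intro w
    have := (hMBP d w).1
    rw [le_div_iff₀ hD] at this
    linarith [this]
  have hhi : ∀ w, post d w ≤ fD d * Real.exp εm := by
    intro w
    have := (hMBP d w).2
    rw [div_le_iff₀ hD] at this
    linarith [this]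
  -- bounds on the integral
  have hIlo : fD d * Real.exp (-εm) ≤ ∫ w, post d w ∂P := by
    calc fD d * Real.exp (-εm) = ∫ _, fD d * Real.exp (-εm) ∂P := by
          simp [integral_const]
      _ ≤ ∫ w, post d w ∂P := integral_mono (integrable_const _) (hint d) hlo
  have hIhi : (∫ w, post d w ∂P) ≤ fD d * Real.exp εm := by
    calc (∫ w, post d w ∂P) ≤ ∫ _, fD d * Real.exp εm ∂P :=
          integral_mono (hint d) (integrable_const _) hhi
      _ = fD d * Real.exp εm := by simp [integral_const]
  have hIpos : 0 < ∫ w, post d w ∂P :=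
    lt_of_lt_of_le (by positivity) hIlo
  -- bounds on fB d
  have hBlo : fD d * Real.exp (-ε) ≤ fB d := by
    have := (hprior d).1
    rw [le_div_iff₀ hD] at this
    linarith [this]
  have hBhi : fB d ≤ fD d * Real.exp ε := by
    have := (hprior d).2
    rw [div_le_iff₀ hD] at this
    linarith [this]
  -- ratio bounds
  have hrlo : Real.exp (-(εm + ε)) ≤ (∫ w, post d w ∂P) / fB d := by
    rw [le_div_iff₀ hB]
    calc Real.exp (-(εm + ε)) * fB d ≤ Real.exp (-(εm + ε)) * (fD d * Real.exp ε) := by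
          exact mul_le_mul_of_nonneg_left hBhi (Real.exp_pos _).le
      _ = fD d * (Real.exp (-(εm + ε)) * Real.exp ε) := by ring
      _ = fD d * Real.exp (-εm) := by rw [← Real.exp_add]; congr 1; ring
      _ ≤ ∫ w, post d w ∂P := hIlo
  have hrhi : (∫ w, post d w ∂P) / fB d ≤ Real.exp (εm + ε) := by
    rw [div_le_iff₀ hB]
    calc (∫ w, post d w ∂P) ≤ fD d * Real.exp εm := hIhi
      _ = fD d * (Real.exp (εm + ε) * Real.exp (-ε)) := by
          rw [← Real.exp_add]; congr 1; ring
      _ = Real.exp (εm + ε) * (fD d * Real.exp (-ε)) := by ring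
      _ ≤ Real.exp (εm + ε) * fB d := by
          exact mul_le_mul_of_nonneg_left hBlo (Real.exp_pos _).le
  rw [abs_le]
  constructor
  · have := Real.log_le_log (Real.exp_pos _) hrlo
    rwa [Real.log_exp] at this
  · have := Real.log_le_log (div_pos hIpos hB) hrhi
    rwa [Real.log_exp] at this
end

section
/- If two probability densities f^A and f^B on a measure space satisfy |log(f^A(d)/f^B(d))| ≤ c for all d, then the Jensen–Shannon divergence satisfies JS(f^A ‖ f^B) ≤ (1/2)·c·(e^c − 1). -/
open Real MeasureTheory

/-- Jensen–Shannon divergence of two densities w.r.t. a reference measure μ. -/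
noncomputable def JSdiv {α : Type*} [MeasurableSpace α] (μ : Measure α)
    (fA fB : α → ℝ) : ℝ :=
  (1 / 2) * (∫ d, fA d * Real.log (fA d / ((fA d + fB d) / 2)) ∂μ
    + ∫ d, fB d * Real.log (fB d / ((fA d + fB d) / 2)) ∂μ)

/-- Pointwise bound on the log ratio to the midpoint density. -/
lemma pt_abs (a b c : ℝ) (ha : 0 < a) (hb : 0 < b) (hc : 0 ≤ c)
    (h : |Real.log (a / b)| ≤ c) :
    |Real.log (a / ((a + b) / 2))| ≤ c := by
  have hm : 0 < (a + b) / 2 := by linarith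
  have hab : 0 < a / b := div_pos ha hb
  obtain ⟨h1, h2⟩ := abs_le.1 h
  have hub : a / b ≤ Real.exp c := by
    rw [← Real.exp_log hab]; exact Real.exp_le_exp.2 h2
  have hlb : Real.exp (-c) ≤ a / b := by
    rw [← Real.exp_log hab]; exact Real.exp_le_exp.2 (by linarith)
  have haub : a ≤ b * Real.exp c := by
    rw [div_le_iff₀ hb] at hub; linarith
  have halb : b * Real.exp (-c) ≤ a := by
    rw [le_div_iff₀ hb] at hlb; linarith
  have he : Real.exp c * Real.exp (-c) = 1 := by rw [← Real.exp_add]; simp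
  have he1 : 1 ≤ Real.exp c := Real.one_le_exp hc
  have hme : 0 < Real.exp (-c) := Real.exp_pos _
  have hce : 0 < Real.exp c := Real.exp_pos _
  rw [abs_le]
  constructor
  · rw [← Real.log_exp (-c)]
    apply Real.log_le_log (Real.exp_pos _)
    rw [Real.exp_neg, inv_le_iff_one_le_mul₀ hce, div_mul_eq_mul_div, le_div_iff₀ hm]
    nlinarith
  · rw [← Real.log_exp c]
    apply Real.log_le_log (div_pos ha hm)
    rw [div_le_iff₀ hm]
    nlinarith

/-- Pointwise bound on one JS integrand. -/
lemma pt_main (a b c : ℝ) (ha : 0 < a) (hb : 0 < b) (hc : 0 ≤ c)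
    (h : |Real.log (a / b)| ≤ c) :
    a * Real.log (a / ((a + b) / 2)) ≤
      (a - (a + b) / 2) + (c * (Real.exp c - 1) / 2) * a := by
  set m := (a + b) / 2 with hmdef
  have hm : 0 < m := by rw [hmdef]; linarith
  set L := Real.log (a / m) with hL
  have habs : |L| ≤ c := pt_abs a b c ha hb hc h
  have h1 : m * L ≤ a - m := by
    have := Real.log_le_sub_one_of_pos (div_pos ha hm)
    calc m * L ≤ m * (a / m - 1) := by nlinarith
      _ = a - m := by field_simp
  obtain ⟨hl1, hl2⟩ := abs_le.1 h
  have hab : 0 < a / b := div_pos ha hb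
  have hub : a / b ≤ Real.exp c := by
    rw [← Real.exp_log hab]; exact Real.exp_le_exp.2 hl2
  have hlb : Real.exp (-c) ≤ a / b := by
    rw [← Real.exp_log hab]; exact Real.exp_le_exp.2 (by linarith)
  have haub : a ≤ b * Real.exp c := by rw [div_le_iff₀ hb] at hub; linarith
  have halb : b * Real.exp (-c) ≤ a := by rw [le_div_iff₀ hb] at hlb; linarith
  have he : Real.exp c * Real.exp (-c) = 1 := by rw [← Real.exp_add]; simp
  have he1 : 1 ≤ Real.exp c := Real.one_le_exp hc
  have hme : 0 < Real.exp (-c) := Real.exp_pos _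
  have habd : |a - b| ≤ (Real.exp c - 1) * a := by
    rw [abs_le]
    constructor
    · nlinarith
    · nlinarith
  have h2 : (a - m) * L ≤ (Real.exp c - 1) * a / 2 * c := by
    calc (a - m) * L ≤ |(a - m) * L| := le_abs_self _
      _ = |a - m| * |L| := abs_mul _ _
      _ ≤ ((Real.exp c - 1) * a / 2) * c := by
          apply mul_le_mul _ habs (abs_nonneg _) (by nlinarith)
          rw [hmdef]
          rw [show a - (a + b) / 2 = (a - b) / 2 by ring, abs_div]
          rw [abs_of_nonneg (by norm_num : (0:ℝ) ≤ 2)]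
          linarith [habd]
  nlinarith [h1, h2]

/-- Bound on one term of the JS divergence. -/
lemma integral_term_le {α : Type*} [MeasurableSpace α] (μ : Measure α)
    (fA fB : α → ℝ) (c : ℝ) (hc : 0 ≤ c)
    (hA : ∀ d, 0 < fA d) (hB : ∀ d, 0 < fB d)
    (intA : Integrable fA μ) (intB : Integrable fB μ)
    (hA1 : ∫ d, fA d ∂μ = 1) (hB1 : ∫ d, fB d ∂μ = 1)
    (hlog : ∀ d, |Real.log (fA d / fB d)| ≤ c) :
    ∫ d, fA d * Real.log (fA d / ((fA d + fB d) / 2)) ∂μ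
      ≤ c * (Real.exp c - 1) / 2 := by
  have hmeas : AEStronglyMeasurable
      (fun d => fA d * Real.log (fA d / ((fA d + fB d) / 2))) μ := by
    apply AEMeasurable.aestronglyMeasurable
    exact intA.aemeasurable.mul
      ((Real.measurable_log.comp_aemeasurable
        (intA.aemeasurable.div
          ((intA.aemeasurable.add intB.aemeasurable).div_const 2))))
  have hint : Integrable (fun d => fA d * Real.log (fA d / ((fA d + fB d) / 2))) μ := by
    apply Integrable.mono (intA.const_mul c) hmeas
    filter_upwards with d
    rw [norm_mul, Real.norm_eq_abs, Real.norm_eq_abs, Real.norm_eq_abs,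
      abs_of_pos (hA d)]
    calc fA d * |Real.log (fA d / ((fA d + fB d) / 2))|
        ≤ fA d * c := by
          exact mul_le_mul_of_nonneg_left
            (pt_abs _ _ _ (hA d) (hB d) hc (hlog d)) (hA d).le
      _ ≤ |c * fA d| := by
          rw [abs_mul, abs_of_nonneg hc, abs_of_pos (hA d)]; linarith
  have iM : Integrable (fun d => (fA d + fB d) / 2) μ := (intA.add intB).div_const 2
  have i1 : Integrable (fun d => fA d - (fA d + fB d) / 2) μ := intA.sub iM
  have i2 : Integrable (fun d => (c * (Real.exp c - 1) / 2) * fA d) μ := intA.const_mul _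
  have hintR : Integrable
      (fun d => (fA d - (fA d + fB d) / 2) + (c * (Real.exp c - 1) / 2) * fA d) μ :=
    i1.add i2
  have hle := integral_mono hint hintR
    (fun d => pt_main _ _ _ (hA d) (hB d) hc (hlog d))
  have heq : ∫ d, ((fA d - (fA d + fB d) / 2) + (c * (Real.exp c - 1) / 2) * fA d) ∂μ
      = c * (Real.exp c - 1) / 2 := by
    rw [integral_add i1 i2, integral_sub intA iM, MeasureTheory.integral_const_mul,
      integral_div, integral_add intA intB, hA1, hB1]
    ring
  linarith [hle, heq.le, heq.ge]

/-- a pointwise log-ratio bound `|log(f^A/f^B)| ≤ c` implies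
`JS(f^A‖f^B) ≤ (1/2)·c·(e^c − 1)`. -/
theorem js_le_of_log_ratio_bound
    {α : Type*} [MeasurableSpace α] (μ : Measure α)
    (fA fB : α → ℝ) (c : ℝ) (hc : 0 ≤ c)
    (hA : ∀ d, 0 < fA d) (hB : ∀ d, 0 < fB d)
    (hA1 : ∫ d, fA d ∂μ = 1) (hB1 : ∫ d, fB d ∂μ = 1)
    (hlog : ∀ d, |Real.log (fA d / fB d)| ≤ c) :
    JSdiv μ fA fB ≤ (1 / 2) * c * (Real.exp c - 1) := by
  have intA : Integrable fA μ := by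
    by_contra h
    rw [integral_undef h] at hA1
    norm_num at hA1
  have intB : Integrable fB μ := by
    by_contra h
    rw [integral_undef h] at hB1
    norm_num at hB1
  have hlog' : ∀ d, |Real.log (fB d / fA d)| ≤ c := by
    intro d
    rw [← abs_neg, ← Real.log_inv, inv_div]
    exact hlog d
  have h1 := integral_term_le μ fA fB c hc hA hB intA intB hA1 hB1 hlog
  have h2 := integral_term_le μ fB fA c hc hB hA intB intA hB1 hA1 hlog'
  have h2' : ∫ d, fB d * Real.log (fB d / ((fA d + fB d) / 2)) ∂μ
      ≤ c * (Real.exp c - 1) / 2 := by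
    simpa [add_comm] using h2
  rw [JSdiv]
  linarith
end

section
/- Under the assumptions that the attacker's prior satisfies |log(f^B(d)/f_D(d))| ≤ ε and the mechanism satisfies ε_m-Maximum Bayesian Privacy, the Average Bayesian Privacy leakage ε_a = sqrt(JS(F^A ‖ F^B)) is bounded by ε_a ≤ (1/√2)·sqrt((ε_m + ε)·(e^{ε_m+ε} − 1)). -/
open Real MeasureTheory

/-!
With `c = εm + ε`, the MBP bounds survive averaging over `w` and compose with the prior bound,
so `exp (-c) ≤ fA / fB ≤ exp c` pointwise. By `log x ≤ x - 1` the JS integrand is at most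
`(fA - fB)² / (fA + fB)`, which on this ratio range is at most
`(e^c - 1)² / (e^c + 1) · fB ≤ c (e^c - 1) fB`, because `(e^c - 1) / (e^c + 1) ≤ c`.
Integrating against `∫ fB = 1` gives `JS ≤ c (e^c - 1) / 2`.

Nothing forces `fA` to be measurable, so an integral in `JSdiv` may be the junk value `0`.
If `fA` is not a.e.-measurable, the second integrand is not integrable, since `fA` can be
recovered from it. The first is then either not integrable, or `c ≥ log 2`: for `c < log 2`
the ratio stays in `[1/2, 2]`, where `x ↦ x log (2x / (x + 1))` is injective, so `fA` could be
recovered from it as well. For `c ≥ log 2` the first integrand alone is at most `c (e^c - 1) fB`.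
-/

open Set

lemma mul_exp_sub_one_nonneg (c : ℝ) : 0 ≤ c * (exp c - 1) := by
  rcases le_total 0 c with hc | hc
  · exact mul_nonneg hc (by linarith [one_le_exp hc])
  · exact mul_nonneg_of_nonpos_of_nonpos hc (by linarith [exp_le_one_iff.2 hc])

lemma exp_sub_one_le_mul_exp_add_one {c : ℝ} (hc : 0 ≤ c) : exp c - 1 ≤ c * (exp c + 1) := by
  have h := add_one_le_exp (-c)
  have h' : exp (-c) * exp c = 1 := by rw [← exp_add, neg_add_cancel, exp_zero]
  nlinarith [exp_pos c]

lemma mul_log_div_midpoint_add_le {a b : ℝ} (ha : 0 < a) (hb : 0 < b) :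
    a * log (a / ((a + b) / 2)) + b * log (b / ((a + b) / 2)) ≤ (a - b) ^ 2 / (a + b) := by
  calc a * log (a / ((a + b) / 2)) + b * log (b / ((a + b) / 2))
      ≤ a * (a / ((a + b) / 2) - 1) + b * (b / ((a + b) / 2) - 1) := by
        gcongr
        · exact log_le_sub_one_of_pos (by positivity)
        · exact log_le_sub_one_of_pos (by positivity)
    _ = (a - b) ^ 2 / (a + b) := by field_simp; ring

def RatioBounded (c a b : ℝ) : Prop := exp (-c) ≤ a / b ∧ a / b ≤ exp c

namespace RatioBounded

variable {c c' a b e : ℝ}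

lemma div_pos (h : RatioBounded c a b) : 0 < a / b := (exp_pos _).trans_le h.1

lemma nonneg (h : RatioBounded c a b) : 0 ≤ c := by
  linarith [exp_le_exp.1 (h.1.trans h.2)]

lemma symm (h : RatioBounded c a b) : RatioBounded c b a := by
  rw [RatioBounded, ← inv_div, exp_neg]
  exact ⟨inv_anti₀ h.div_pos h.2, (inv_le_comm₀ h.div_pos (exp_pos c)).2 (exp_neg c ▸ h.1)⟩

lemma trans (h : RatioBounded c a b) (h' : RatioBounded c' b e) : RatioBounded (c + c') a e := by
  have hb : b ≠ 0 := by rintro rfl; simpa using h.div_pos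
  have hae : a / e = a / b * (b / e) := by rw [div_mul_div_cancel₀ hb]
  rw [RatioBounded, hae, neg_add, exp_add, exp_add]
  exact ⟨mul_le_mul h.1 h'.1 (exp_pos _).le h.div_pos.le,
    mul_le_mul h.2 h'.2 h'.div_pos.le (exp_pos _).le⟩

lemma integral {Ω : Type*} [MeasurableSpace Ω] {P : Measure Ω} [IsProbabilityMeasure P]
    {f : Ω → ℝ} (hf : Integrable f P) (h : ∀ w, RatioBounded c (f w) b) :
    RatioBounded c (∫ w, f w ∂P) b := by
  rw [RatioBounded, ← integral_div]
  constructor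
  · simpa using integral_mono (integrable_const _) (hf.div_const b) fun w => (h w).1
  · simpa using integral_mono (hf.div_const b) (integrable_const _) fun w => (h w).2

lemma pos (h : RatioBounded c a b) (hb : 0 < b) : 0 < a :=
  (div_pos_iff_of_pos_right hb).1 h.div_pos

lemma le_exp_mul (h : RatioBounded c a b) (hb : 0 < b) : a ≤ exp c * b := (div_le_iff₀ hb).1 h.2

lemma exp_neg_mul_le (h : RatioBounded c a b) (hb : 0 < b) : exp (-c) * b ≤ a :=
  (le_div_iff₀ hb).1 h.1

lemma midpoint (h : RatioBounded c a b) (hb : 0 < b) : RatioBounded c a ((a + b) / 2) := by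
  have ha := h.pos hb
  have h₁ := h.le_exp_mul hb
  have h₂ := h.exp_neg_mul_le hb
  have hE : 1 ≤ exp c := one_le_exp h.nonneg
  have hE' : exp (-c) ≤ 1 := exp_le_one_iff.2 (by linarith [h.nonneg])
  have hm : 0 < (a + b) / 2 := by linarith
  rw [RatioBounded, le_div_iff₀ hm, div_le_iff₀ hm]
  constructor <;> nlinarith

lemma abs_log_le (h : RatioBounded c a b) : |log (a / b)| ≤ c := by
  have h₁ := log_le_log (exp_pos _) h.1
  have h₂ := log_le_log h.div_pos h.2
  rw [log_exp] at h₁ h₂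
  exact abs_le.2 ⟨by linarith, h₂⟩

-- The quadratic `(exp c - 1)² (a + b) b - (exp c + 1) (a - b)²` factors as
-- `(exp c * b - a) ((exp c + 1) a + (exp c - 3) b)`.
lemma sq_sub_div_add_le (h : RatioBounded c a b) (hb : 0 < b) :
    (a - b) ^ 2 / (a + b) ≤ (exp c - 1) ^ 2 / (exp c + 1) * b := by
  have ha := h.pos hb
  have h₁ : 0 ≤ exp c * b - a := by linarith [h.le_exp_mul hb]
  have h₂ : b ≤ exp c * a := h.symm.le_exp_mul ha
  have hE : 1 ≤ exp c := one_le_exp h.nonneg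
  rw [div_mul_eq_mul_div, div_le_div_iff₀ (by positivity) (by positivity)]
  nlinarith [mul_nonneg h₁ (by nlinarith : 0 ≤ (exp c + 1) * a + (exp c - 3) * b)]

lemma mul_log_div_midpoint_add_le (h : RatioBounded c a b) (hb : 0 < b) :
    a * log (a / ((a + b) / 2)) + b * log (b / ((a + b) / 2)) ≤ c * (exp c - 1) * b := by
  have hE : 1 ≤ exp c := one_le_exp h.nonneg
  have hsq : (exp c - 1) ^ 2 / (exp c + 1) ≤ c * (exp c - 1) := by
    rw [div_le_iff₀ (by positivity)]
    nlinarith [exp_sub_one_le_mul_exp_add_one h.nonneg]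
  calc _ ≤ (a - b) ^ 2 / (a + b) := _root_.mul_log_div_midpoint_add_le (h.pos hb) hb
    _ ≤ (exp c - 1) ^ 2 / (exp c + 1) * b := h.sq_sub_div_add_le hb
    _ ≤ c * (exp c - 1) * b := by gcongr

lemma abs_mul_log_div_midpoint_le (h : RatioBounded c a b) (hb : 0 < b) :
    |a * log (a / ((a + b) / 2))| ≤ c * a := by
  rw [abs_mul, abs_of_pos (h.pos hb), mul_comm c]
  exact mul_le_mul_of_nonneg_left (h.midpoint hb).abs_log_le (h.pos hb).le

-- `a / ((a + b) / 2) ≤ exp (c / 2)`, and `exp c / 2 ≤ exp c - 1` once `exp c ≥ 2`.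
lemma mul_log_div_midpoint_le_of_log_two_le (h : RatioBounded c a b) (hb : 0 < b)
    (hc : log 2 ≤ c) : a * log (a / ((a + b) / 2)) ≤ c * (exp c - 1) * b := by
  have ha := h.pos hb
  have hm : 0 < (a + b) / 2 := by linarith
  have ht : exp (c / 2) ^ 2 = exp c := by rw [← exp_nat_mul]; ring_nf
  have hE : 2 ≤ exp c := by simpa [exp_log] using exp_le_exp.2 hc
  have hmid : a / ((a + b) / 2) ≤ exp (c / 2) := by
    rw [div_le_iff₀ hm]
    nlinarith [h.le_exp_mul hb, exp_pos (c / 2), sq_nonneg (exp (c / 2) - 1)]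
  have hlog : log (a / ((a + b) / 2)) ≤ c / 2 := by
    simpa using log_le_log (by positivity) hmid
  calc a * log (a / ((a + b) / 2)) ≤ a * (c / 2) := by gcongr
    _ ≤ exp c * b * (c / 2) := by gcongr; exacts [by linarith [h.nonneg], h.le_exp_mul hb]
    _ ≤ c * (exp c - 1) * b := by
      nlinarith [mul_nonneg (mul_nonneg h.nonneg hb.le) (by linarith : 0 ≤ exp c / 2 - 1)]

end RatioBounded

-- `KL(P ‖ (P + Q) / 2) = ∫ q · klMid (p / q)`
noncomputable def klMid (x : ℝ) : ℝ := x * log (x / ((x + 1) / 2))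

lemma hasDerivAt_klMid {x : ℝ} (hx : 0 < x) :
    HasDerivAt klMid (log (x / ((x + 1) / 2)) + 1 / (x + 1)) x := by
  have hm : HasDerivAt (fun y : ℝ => y / ((y + 1) / 2)) (2 / (x + 1) ^ 2) x :=
    ((hasDerivAt_id' x).div (((hasDerivAt_id' x).add_const 1).div_const 2)
      (by positivity)).congr_deriv (by field_simp; ring)
  exact ((hasDerivAt_id' x).mul (hm.log (by positivity))).congr_deriv (by field_simp)

lemma strictMonoOn_klMid : StrictMonoOn klMid (Icc (1 / 2) 2) := by
  have hpos : ∀ x ∈ Icc (1 / 2 : ℝ) 2, 0 < x := fun x hx => by linarith [hx.1]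
  refine strictMonoOn_of_hasDerivWithinAt_pos (convex_Icc _ _)
    (fun x hx => (hasDerivAt_klMid (hpos x hx)).continuousAt.continuousWithinAt)
    (fun x hx => (hasDerivAt_klMid (hpos x (interior_subset hx))).hasDerivWithinAt) ?_
  rw [interior_Icc]
  rintro x ⟨hx₁, -⟩
  have hx : 0 < x := by linarith
  have hlog := one_sub_inv_le_log_of_pos (show 0 < x / ((x + 1) / 2) by positivity)
  have : 0 < 1 - (x / ((x + 1) / 2))⁻¹ + 1 / (x + 1) := by
    rw [show 1 - (x / ((x + 1) / 2))⁻¹ + 1 / (x + 1) = (x ^ 2 + 2 * x - 1) / (2 * x * (x + 1)) by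
      field_simp; ring]
    exact div_pos (by nlinarith) (by positivity)
  linarith

theorem StrictMonoOn.exists_monotone_leftInvOn {α β : Type*} [LinearOrder α]
    [ConditionallyCompleteLinearOrder β] [Nonempty β] {f : β → α} {s : Set β}
    (hf : StrictMonoOn f s) (hl : BddBelow s) (hu : BddAbove s) :
    ∃ g : α → β, Monotone g ∧ LeftInvOn g f s := by
  have hinv : LeftInvOn (Function.invFunOn f s) f s := hf.injOn.leftInvOn_invFunOn
  have hmono : MonotoneOn (Function.invFunOn f s) (f '' s) := by
    rintro _ ⟨x, hx, rfl⟩ _ ⟨y, hy, rfl⟩ hxy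
    rw [hinv hx, hinv hy]
    exact (hf.le_iff_le hx hy).1 hxy
  have himage : Function.invFunOn f s '' (f '' s) = s := hinv.image_image
  obtain ⟨g, hg, hgf⟩ := hmono.exists_monotone_extension (by rwa [himage]) (by rwa [himage])
  exact ⟨g, hg, fun x hx => (hgf (mem_image_of_mem f hx)).symm.trans (hinv hx)⟩

lemma mul_log_div_midpoint_eq_mul_klMid {a b : ℝ} (hb : b ≠ 0) :
    a * log (a / ((a + b) / 2)) = b * klMid (a / b) := by
  rw [klMid, show a / b / ((a / b + 1) / 2) = a / ((a + b) / 2) by field_simp]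
  field_simp

section Integral

variable {α : Type*} [MeasurableSpace α] {μ : Measure α} {fA fB : α → ℝ} {c : ℝ}

lemma aemeasurable_of_integrable_mul_log_div_midpoint_right (hfA : ∀ d, 0 < fA d)
    (hfB : ∀ d, 0 < fB d) (hB : AEMeasurable fB μ)
    (h : Integrable (fun d => fB d * log (fB d / ((fA d + fB d) / 2))) μ) :
    AEMeasurable fA μ := by
  have hinv : ∀ d, fA d = 2 * fB d * exp (-(fB d * log (fB d / ((fA d + fB d) / 2)) / fB d))
      - fB d := fun d => by
    have hm : 0 < (fA d + fB d) / 2 := by linarith [hfA d, hfB d]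
    rw [mul_div_cancel_left₀ _ (hfB d).ne', exp_neg, exp_log (div_pos (hfB d) hm), inv_div]
    field_simp [(hfB d).ne']
    ring
  rw [funext hinv]
  have := h.aemeasurable
  fun_prop

lemma aemeasurable_of_integrable_mul_log_div_midpoint_left (hfB : ∀ d, 0 < fB d)
    (hB : AEMeasurable fB μ) (hr : ∀ d, RatioBounded c (fA d) (fB d)) (hc : c < log 2)
    (h : Integrable (fun d => fA d * log (fA d / ((fA d + fB d) / 2))) μ) :
    AEMeasurable fA μ := by
  have hmem : ∀ d, fA d / fB d ∈ Icc (1 / 2 : ℝ) 2 := fun d => by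
    have h₁ : exp (-log 2) < exp (-c) := exp_lt_exp.2 (by linarith)
    have h₂ : exp c < exp (log 2) := exp_lt_exp.2 hc
    rw [exp_neg, exp_log two_pos] at h₁
    rw [exp_log two_pos] at h₂
    exact ⟨by linarith [(hr d).1], by linarith [(hr d).2]⟩
  obtain ⟨g, hg, hgf⟩ := strictMonoOn_klMid.exists_monotone_leftInvOn bddBelow_Icc bddAbove_Icc
  have hinv : ∀ d, fA d = fB d * g (fA d * log (fA d / ((fA d + fB d) / 2)) / fB d) := fun d => by
    rw [mul_log_div_midpoint_eq_mul_klMid (hfB d).ne', mul_div_cancel_left₀ _ (hfB d).ne',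
      hgf (hmem d), mul_div_cancel₀ _ (hfB d).ne']
  rw [funext hinv]
  exact hB.mul (hg.measurable.comp_aemeasurable (h.aemeasurable.div hB))

lemma integrable_mul_log_div_midpoint (hfB : ∀ d, 0 < fB d) (hBint : Integrable fB μ)
    (hr : ∀ d, RatioBounded c (fA d) (fB d)) (hA : AEMeasurable fA μ) :
    Integrable (fun d => fA d * log (fA d / ((fA d + fB d) / 2))) μ ∧
      Integrable (fun d => fB d * log (fB d / ((fA d + fB d) / 2))) μ := by
  have hB := hBint.aemeasurable
  constructor
  · refine (hBint.const_mul (c * exp c)).mono' (by fun_prop) (ae_of_all _ fun d => ?_)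
    calc ‖fA d * log (fA d / ((fA d + fB d) / 2))‖ ≤ c * fA d :=
          (hr d).abs_mul_log_div_midpoint_le (hfB d)
      _ ≤ c * (exp c * fB d) := by gcongr; exacts [(hr d).nonneg, (hr d).le_exp_mul (hfB d)]
      _ = c * exp c * fB d := by ring
  · refine (hBint.const_mul c).mono' (by fun_prop) (ae_of_all _ fun d => ?_)
    rw [norm_eq_abs, add_comm (fA d)]
    exact (hr d).symm.abs_mul_log_div_midpoint_le ((hr d).pos (hfB d))

lemma JSdiv_le_of_ratioBounded (hfB : ∀ d, 0 < fB d) (hB1 : ∫ d, fB d ∂μ = 1)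
    (hr : ∀ d, RatioBounded c (fA d) (fB d)) : JSdiv μ fA fB ≤ c * (exp c - 1) / 2 := by
  have hBint : Integrable fB μ := Integrable.of_integral_ne_zero (by simp [hB1])
  have hB := hBint.aemeasurable
  have hbound : ∫ d, c * (exp c - 1) * fB d ∂μ = c * (exp c - 1) := by
    rw [integral_const_mul, hB1, mul_one]
  by_cases hA : AEMeasurable fA μ
  · obtain ⟨h₁, h₂⟩ := integrable_mul_log_div_midpoint hfB hBint hr hA
    rw [JSdiv, ← integral_add h₁ h₂]
    have := integral_mono (h₁.add h₂) (hBint.const_mul _)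
      fun d => (hr d).mul_log_div_midpoint_add_le (hfB d)
    simp only [Pi.add_apply] at this
    linarith
  have h₂ : ¬Integrable (fun d => fB d * log (fB d / ((fA d + fB d) / 2))) μ := fun h₂ =>
    hA (aemeasurable_of_integrable_mul_log_div_midpoint_right (fun d => (hr d).pos (hfB d))
      hfB hB h₂)
  rw [JSdiv, integral_undef h₂, add_zero]
  by_cases h₁ : Integrable (fun d => fA d * log (fA d / ((fA d + fB d) / 2))) μ
  · have hc : log 2 ≤ c := not_lt.1 fun hc =>
      hA (aemeasurable_of_integrable_mul_log_div_midpoint_left hfB hB hr hc h₁)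
    have := integral_mono h₁ (hBint.const_mul _)
      fun d => (hr d).mul_log_div_midpoint_le_of_log_two_le (hfB d) hc
    linarith
  · rw [integral_undef h₁]
    linarith [mul_exp_sub_one_nonneg c]

end Integral

theorem abp_le_of_mbp_general
    {α : Type*} [MeasurableSpace α] (μ : Measure α)
    {Ω : Type*} [MeasurableSpace Ω] (P : Measure Ω) [IsProbabilityMeasure P]
    (fD fB : α → ℝ) (post : α → Ω → ℝ) (fA : α → ℝ) (εm ε : ℝ)
    (hfB : ∀ d, 0 < fB d)
    (hB1 : ∫ d, fB d ∂μ = 1)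
    (hint : ∀ d, Integrable (post d) P)
    (hfA : ∀ d, fA d = ∫ w, post d w ∂P)
    (hprior : ∀ d, Real.exp (-ε) ≤ fB d / fD d ∧ fB d / fD d ≤ Real.exp ε)
    (hMBP : ∀ d w, Real.exp (-εm) ≤ post d w / fD d ∧ post d w / fD d ≤ Real.exp εm) :
    Real.sqrt (JSdiv μ fA fB)
      ≤ (1 / Real.sqrt 2) * Real.sqrt ((εm + ε) * (Real.exp (εm + ε) - 1)) := by
  have hr : ∀ d, RatioBounded (εm + ε) (fA d) (fB d) := fun d => by
    rw [hfA d]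
    exact (RatioBounded.integral (hint d) (hMBP d)).trans (RatioBounded.symm (hprior d))
  calc √(JSdiv μ fA fB) ≤ √((εm + ε) * (exp (εm + ε) - 1) / 2) :=
        sqrt_le_sqrt (JSdiv_le_of_ratioBounded hfB hB1 hr)
    _ = 1 / √2 * √((εm + ε) * (exp (εm + ε) - 1)) := by
        rw [sqrt_div' _ zero_le_two, one_div_mul_eq_div]

/-- Relationship between MBP and ABP: under an ε-accurate prior
belief and ε_m-Maximum Bayesian Privacy, the Average Bayesian Privacy leakage
`sqrt(JS(F^A‖F^B))` is at most `(1/√2)·sqrt((ε_m+ε)(e^{ε_m+ε} − 1))`. -/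
theorem abp_le_of_mbp
    {α : Type*} [MeasurableSpace α] (μ : Measure α)
    {Ω : Type*} [MeasurableSpace Ω] (P : Measure Ω) [IsProbabilityMeasure P]
    (fD fB : α → ℝ) (post : α → Ω → ℝ) (fA : α → ℝ) (εm ε : ℝ)
    (hεm : 0 ≤ εm) (hε : 0 ≤ ε)
    (hfD : ∀ d, 0 < fD d) (hfB : ∀ d, 0 < fB d)
    (hB1 : ∫ d, fB d ∂μ = 1)
    (hint : ∀ d, Integrable (post d) P)
    (hfA : ∀ d, fA d = ∫ w, post d w ∂P)
    (hprior : ∀ d, Real.exp (-ε) ≤ fB d / fD d ∧ fB d / fD d ≤ Real.exp ε)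
    (hMBP : ∀ d w, Real.exp (-εm) ≤ post d w / fD d ∧ post d w / fD d ≤ Real.exp εm) :
    Real.sqrt (JSdiv μ fA fB)
      ≤ (1 / Real.sqrt 2) * Real.sqrt ((εm + ε) * (Real.exp (εm + ε) - 1)) :=
  abp_le_of_mbp_general μ P fD fB post fA εm ε hfB hB1 hint hfA hprior hMBP
end

section
/- Suppose a mechanism satisfies ξ-local differential privacy: f_{W|D}(w|d₁)/f_{W|D}(w|d₂) ≤ e^{ξ} for all d₁, d₂, w. Then for any prior f_D, the mechanism satisfies ξ-Maximum Bayesian Privacy: e^{-ξ} ≤ f_{D|W}(d|w)/f_D(d) ≤ e^{ξ} for all d, w. -/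
open Real MeasureTheory

/-- ξ-local differential privacy on the likelihood implies
ξ-Maximum Bayesian Privacy for any prior, via Bayes' rule. -/
theorem mbp_of_ldp
    {Dty : Type*} [MeasurableSpace Dty] (μ : Measure Dty) {Ω : Type*}
    (fD : Dty → ℝ) (fW : Ω → ℝ) (like : Ω → Dty → ℝ) (post : Dty → Ω → ℝ)
    (ξ : ℝ)
    (hfD : ∀ d, 0 < fD d) (hfD1 : ∫ d, fD d ∂μ = 1)
    (hlike : ∀ w d, 0 < like w d)
    (hint : ∀ w, Integrable (fun d => like w d * fD d) μ)
    (hfW : ∀ w, fW w = ∫ d', like w d' * fD d' ∂μ) (hfWpos : ∀ w, 0 < fW w)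
    (hBayes : ∀ d w, post d w = like w d * fD d / fW w)
    (hLDP : ∀ (d₁ d₂ : Dty) (w : Ω), like w d₁ / like w d₂ ≤ Real.exp ξ) :
    ∀ (d : Dty) (w : Ω),
      Real.exp (-ξ) ≤ post d w / fD d ∧ post d w / fD d ≤ Real.exp ξ := by
  intro d w
  have hfDint : Integrable fD μ := by
    by_contra h
    rw [integral_undef h] at hfD1
    exact one_ne_zero hfD1.symm
  -- key ratio
  have hratio : post d w / fD d = like w d / fW w := by
    have h : post d w = like w d / fW w * fD d := by rw [hBayes]; ring
    rw [h, mul_div_assoc, div_self (hfD d).ne', mul_one]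
  -- upper bound on fW: fW w ≤ exp ξ * like w d
  have hub : fW w ≤ Real.exp ξ * like w d := by
    rw [hfW]
    have : ∀ d', like w d' * fD d' ≤ (Real.exp ξ * like w d) * fD d' := by
      intro d'
      have := hLDP d' d w
      have h1 : like w d' ≤ Real.exp ξ * like w d :=
        (div_le_iff₀ (hlike w d)).mp this
      exact mul_le_mul_of_nonneg_right h1 (hfD d').le
    calc ∫ d', like w d' * fD d' ∂μ
        ≤ ∫ d', (Real.exp ξ * like w d) * fD d' ∂μ :=
          integral_mono (hint w) (hfDint.const_mul _) this
      _ = Real.exp ξ * like w d := by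
          rw [integral_const_mul, hfD1, mul_one]
  -- lower bound on fW: exp (-ξ) * like w d ≤ fW w
  have hlb : Real.exp (-ξ) * like w d ≤ fW w := by
    rw [hfW]
    have : ∀ d', (Real.exp (-ξ) * like w d) * fD d' ≤ like w d' * fD d' := by
      intro d'
      have := hLDP d d' w
      have h1 : like w d ≤ Real.exp ξ * like w d' :=
        (div_le_iff₀ (hlike w d')).mp this
      have h2 : Real.exp (-ξ) * like w d ≤ like w d' := by
        rw [Real.exp_neg]
        rw [inv_mul_le_iff₀ (Real.exp_pos ξ)]
        exact h1
      exact mul_le_mul_of_nonneg_right h2 (hfD d').le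
    calc Real.exp (-ξ) * like w d
        = ∫ d', (Real.exp (-ξ) * like w d) * fD d' ∂μ := by
          rw [integral_const_mul, hfD1, mul_one]
      _ ≤ ∫ d', like w d' * fD d' ∂μ :=
          integral_mono (hfDint.const_mul _) (hint w) this
  constructor
  · rw [hratio, le_div_iff₀ (hfWpos w)]
    calc Real.exp (-ξ) * fW w ≤ Real.exp (-ξ) * (Real.exp ξ * like w d) :=
          mul_le_mul_of_nonneg_left hub (Real.exp_pos _).le
      _ = like w d := by rw [← mul_assoc, ← Real.exp_add]; simp
  · rw [hratio, div_le_iff₀ (hfWpos w)]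
    calc like w d = Real.exp ξ * (Real.exp (-ξ) * like w d) := by
          rw [← mul_assoc, ← Real.exp_add]; simp
      _ ≤ Real.exp ξ * fW w := mul_le_mul_of_nonneg_left hlb (Real.exp_pos _).le
end
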